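/- Let γ > σ²δ²/(2η²) and let b_γ > 0 be the unique solution of g₁(b_γ) = f₁(γ). Then the function v = v_{γ,b_γ} is increasing and concave on (0,∞), satisfies v'(b_γ) = 1, the ratio v'/v'' is decreasing on (0,∞), and lim_{x↓0} v'(x)/v''(x) = −σ²/(2η). Moreover, if μ ≥ 2η then for every x > 0, sup over u ∈ [0,1] and ξ ∈ [0,x] of { (1/2)σ²u²v''(x) + (η − (1−u)μ)v'(x) − δv(x) + γ(ξ + v(x−ξ) − v(x)) } equals 0. -/

import Mathlib

open Real Filter Set

/-- Positive root θ₊ of (σ²/2)r² + ηr − δ = 0. -/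
noncomputable def thetaP (σ η δ : ℝ) : ℝ := (-η + Real.sqrt (η ^ 2 + 2 * σ ^ 2 * δ)) / σ ^ 2

/-- Negative root θ₋ of (σ²/2)r² + ηr − δ = 0. -/
noncomputable def thetaM (σ η δ : ℝ) : ℝ := (-η - Real.sqrt (η ^ 2 + 2 * σ ^ 2 * δ)) / σ ^ 2

/-- h₁(x) = e^{θ₊x} − e^{θ₋x}. -/
noncomputable def h1 (σ η δ : ℝ) (x : ℝ) : ℝ :=
  Real.exp (thetaP σ η δ * x) - Real.exp (thetaM σ η δ * x)

/-- h₁'(x) = θ₊e^{θ₊x} − θ₋e^{θ₋x}. -/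
noncomputable def h1' (σ η δ : ℝ) (x : ℝ) : ℝ :=
  thetaP σ η δ * Real.exp (thetaP σ η δ * x) - thetaM σ η δ * Real.exp (thetaM σ η δ * x)

/-- g₁(b) = h₁(b)/h₁'(b). -/
noncomputable def g1 (σ η δ : ℝ) (b : ℝ) : ℝ := h1 σ η δ b / h1' σ η δ b

/-- f₁(γ) = ηγ/(δ(δ+γ)) − σ²/(η + √(η² + 2σ²(δ+γ))). -/
noncomputable def f1 (σ η δ : ℝ) (γ : ℝ) : ℝ :=
  η * γ / (δ * (δ + γ)) - σ ^ 2 / (η + Real.sqrt (η ^ 2 + 2 * σ ^ 2 * (δ + γ)))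

/-- λ_γ, the negative root of (σ²/2)r² + ηr − (δ+γ) = 0. -/
noncomputable def lamGamma (σ η δ γ : ℝ) : ℝ :=
  (-η - Real.sqrt (η ^ 2 + 2 * σ ^ 2 * (δ + γ))) / σ ^ 2

/-- c_{1,1}(b). -/
noncomputable def c11 (σ η δ γ b : ℝ) : ℝ :=
  ((γ / (γ + δ)) * (1 - η * lamGamma σ η δ γ / (γ + δ))) /
    (h1' σ η δ b - (δ * lamGamma σ η δ γ / (γ + δ)) * h1 σ η δ b)

/-- c_{1,2}(b). -/
noncomputable def c12 (σ η δ γ b : ℝ) : ℝ :=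
  (1 / (γ + δ)) * (δ * c11 σ η δ γ b * h1 σ η δ b - γ * η / (γ + δ))

/-- The candidate value function v_{γ,b}. -/
noncomputable def vGammaB (σ η δ γ b : ℝ) (x : ℝ) : ℝ :=
  if x ≤ b then c11 σ η δ γ b * h1 σ η δ x
  else c12 σ η δ γ b * Real.exp (lamGamma σ η δ γ * (x - b)) +
    (γ / (γ + δ)) * (x - b + c11 σ η δ γ b * h1 σ η δ b + η / (γ + δ))

/-! On `[0, b]` the function `v = vGammaB σ η δ γ b` is `c₁₁ h₁`, a solution of
`σ²/2 v'' + η v' - δ v = 0`; on `[b, ∞)` it is an exponential plus an affine function, solving the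
same equation with the jump term `γ (x - b + v b - v x)` added. The constants `c₁₁`, `c₁₂` make `v`
of class `C¹` for every `b`; the equation `g₁ b = f₁ γ` is exactly the `C²`-fit condition, and it
forces `c₁₁ = 1 / h₁' b`, i.e. `v' b = 1`.

Then `v' > 0 > v''` everywhere, `v' ≥ 1` left of `b` and `v' ≤ 1` right of `b`, so `y ↦ v y - y`
peaks at `b` and the best jump from `x` is to `min x b`. The ratio `v' / v''` equals `h₁' / h₁''`
on `(-∞, b]`, decreasing because `h₁''² - h₁' h₁''' = θ₊θ₋(θ₊ - θ₋)² e^{(θ₊+θ₋)x} < 0`, and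
`1/λ + γ/(δλ) e^{-λ(x-b)}` on `[b, ∞)`; so it decreases from its value `1 / (θ₊ + θ₋) = -σ²/(2η)`
at `0`. For `μ ≥ 2η` this gives `μ v' + σ² v'' ≥ 0`, which makes `u = 1` the best control. -/

section Roots

variable {σ η δ : ℝ}

theorem abs_lt_sqrt_sq_add (hσ : σ ≠ 0) (hδ : 0 < δ) : |η| < √(η ^ 2 + 2 * σ ^ 2 * δ) := by
  rw [← Real.sqrt_sq_eq_abs]
  exact Real.sqrt_lt_sqrt (sq_nonneg _) (lt_add_of_pos_right _ (by positivity))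

theorem thetaP_pos (hσ : σ ≠ 0) (hδ : 0 < δ) : 0 < thetaP σ η δ :=
  div_pos (by linarith [le_abs_self η, abs_lt_sqrt_sq_add (η := η) hσ hδ]) (by positivity)

theorem thetaM_neg (hσ : σ ≠ 0) (hδ : 0 < δ) : thetaM σ η δ < 0 :=
  div_neg_of_neg_of_pos (by linarith [neg_abs_le η, abs_lt_sqrt_sq_add (η := η) hσ hδ])
    (by positivity)

theorem thetaP_add_thetaM : thetaP σ η δ + thetaM σ η δ = -2 * η / σ ^ 2 := by
  rw [thetaP, thetaM, ← add_div]
  ring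

theorem quadratic_eq_zero_of_sq_eq {s : ℝ} (hσ : σ ≠ 0) (hs : s ^ 2 = η ^ 2 + 2 * σ ^ 2 * δ) :
    σ ^ 2 / 2 * ((-η + s) / σ ^ 2) ^ 2 + η * ((-η + s) / σ ^ 2) - δ = 0 := by
  field_simp
  linear_combination hs

theorem thetaP_isRoot (hσ : σ ≠ 0) (hδ : 0 ≤ δ) :
    σ ^ 2 / 2 * thetaP σ η δ ^ 2 + η * thetaP σ η δ - δ = 0 :=
  quadratic_eq_zero_of_sq_eq (η := η) (δ := δ) hσ (Real.sq_sqrt (by positivity))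

theorem thetaM_isRoot (hσ : σ ≠ 0) (hδ : 0 ≤ δ) :
    σ ^ 2 / 2 * thetaM σ η δ ^ 2 + η * thetaM σ η δ - δ = 0 := by
  have h := quadratic_eq_zero_of_sq_eq (η := η) (δ := δ) (s := -√(η ^ 2 + 2 * σ ^ 2 * δ)) hσ
    (by rw [neg_sq, Real.sq_sqrt (by positivity)])
  rwa [← sub_eq_add_neg] at h

theorem lamGamma_eq_thetaM (γ : ℝ) : lamGamma σ η δ γ = thetaM σ η (δ + γ) := rfl

theorem f1_eq (γ : ℝ) : f1 σ η δ γ = 1 / lamGamma σ η δ γ + γ * η / (δ * (γ + δ)) := by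
  rw [f1, lamGamma, one_div_div, show -η - √(η ^ 2 + 2 * σ ^ 2 * (δ + γ)) =
    -(η + √(η ^ 2 + 2 * σ ^ 2 * (δ + γ))) by ring, div_neg]
  ring

end Roots

noncomputable def h1'' (σ η δ : ℝ) (x : ℝ) : ℝ :=
  thetaP σ η δ ^ 2 * Real.exp (thetaP σ η δ * x) - thetaM σ η δ ^ 2 * Real.exp (thetaM σ η δ * x)

noncomputable def h1''' (σ η δ : ℝ) (x : ℝ) : ℝ :=
  thetaP σ η δ ^ 3 * Real.exp (thetaP σ η δ * x) - thetaM σ η δ ^ 3 * Real.exp (thetaM σ η δ * x)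

section H1

variable {σ η δ : ℝ}

theorem hasDerivAt_mul_exp_sub_mul_exp (a p c q x : ℝ) :
    HasDerivAt (fun y => a * Real.exp (p * y) - c * Real.exp (q * y))
      (a * p * Real.exp (p * x) - c * q * Real.exp (q * x)) x := by
  have hexp (r : ℝ) : HasDerivAt (fun y => Real.exp (r * y)) (Real.exp (r * x) * r) x := by
    simpa using ((hasDerivAt_id x).const_mul r).exp
  exact (((hexp p).const_mul a).sub ((hexp q).const_mul c)).congr_deriv (by ring)

theorem hasDerivAt_h1 (x : ℝ) : HasDerivAt (h1 σ η δ) (h1' σ η δ x) x := by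
  have h := hasDerivAt_mul_exp_sub_mul_exp 1 (thetaP σ η δ) 1 (thetaM σ η δ) x
  simp only [one_mul] at h
  exact h

theorem hasDerivAt_h1' (x : ℝ) : HasDerivAt (h1' σ η δ) (h1'' σ η δ x) x :=
  (hasDerivAt_mul_exp_sub_mul_exp (thetaP σ η δ) (thetaP σ η δ) (thetaM σ η δ) (thetaM σ η δ)
    x).congr_deriv (by simp only [h1'']; ring)

theorem hasDerivAt_h1'' (x : ℝ) : HasDerivAt (h1'' σ η δ) (h1''' σ η δ x) x :=
  (hasDerivAt_mul_exp_sub_mul_exp (thetaP σ η δ ^ 2) (thetaP σ η δ) (thetaM σ η δ ^ 2)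
    (thetaM σ η δ) x).congr_deriv (by simp only [h1''']; ring)

theorem h1_ode (hσ : σ ≠ 0) (hδ : 0 ≤ δ) (x : ℝ) :
    σ ^ 2 / 2 * h1'' σ η δ x + η * h1' σ η δ x - δ * h1 σ η δ x = 0 := by
  simp only [h1, h1', h1'']
  linear_combination Real.exp (thetaP σ η δ * x) * thetaP_isRoot (η := η) hσ hδ -
    Real.exp (thetaM σ η δ * x) * thetaM_isRoot (η := η) hσ hδ

theorem h1'_pos (hσ : σ ≠ 0) (hδ : 0 < δ) (x : ℝ) : 0 < h1' σ η δ x := by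
  have hP := mul_pos (thetaP_pos (η := η) hσ hδ) (Real.exp_pos (thetaP σ η δ * x))
  have hM := mul_neg_of_neg_of_pos (thetaM_neg (η := η) hσ hδ) (Real.exp_pos (thetaM σ η δ * x))
  simp only [h1']
  linarith

theorem strictMono_h1'' (hσ : σ ≠ 0) (hδ : 0 < δ) : StrictMono (h1'' σ η δ) := by
  refine strictMono_of_hasDerivAt_pos hasDerivAt_h1'' fun x => ?_
  have hP := mul_pos (pow_pos (thetaP_pos (η := η) hσ hδ) 3) (Real.exp_pos (thetaP σ η δ * x))
  have hM := mul_neg_of_neg_of_pos (Odd.pow_neg (by decide : Odd 3) (thetaM_neg (η := η) hσ hδ))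
    (Real.exp_pos (thetaM σ η δ * x))
  simp only [h1''']
  linarith

theorem h1''_sq_sub_h1'_mul_h1'''_neg (hσ : σ ≠ 0) (hδ : 0 < δ) (x : ℝ) :
    h1'' σ η δ x ^ 2 - h1' σ η δ x * h1''' σ η δ x < 0 := by
  have hP := thetaP_pos (η := η) hσ hδ
  have hM := thetaM_neg (η := η) hσ hδ
  have hWronskian : h1'' σ η δ x ^ 2 - h1' σ η δ x * h1''' σ η δ x =
      thetaP σ η δ * thetaM σ η δ * (thetaP σ η δ - thetaM σ η δ) ^ 2 *
        (Real.exp (thetaP σ η δ * x) * Real.exp (thetaM σ η δ * x)) := by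
    simp only [h1', h1'', h1''']
    ring
  rw [hWronskian]
  exact mul_neg_of_neg_of_pos (mul_neg_of_neg_of_pos (mul_neg_of_pos_of_neg hP hM)
    (by nlinarith)) (by positivity)

end H1

theorem hasDerivAt_ite_le {f g f' g' : ℝ → ℝ} {b : ℝ} (hf : ∀ x, HasDerivAt f (f' x) x)
    (hg : ∀ x, HasDerivAt g (g' x) x) (hb : f b = g b) (hb' : f' b = g' b) (x : ℝ) :
    HasDerivAt (fun y => if y ≤ b then f y else g y) (if x ≤ b then f' x else g' x) x := by
  rcases lt_trichotomy x b with hx | rfl | hx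
  · rw [if_pos hx.le]
    refine (hf x).congr_of_eventuallyEq ?_
    filter_upwards [Iio_mem_nhds hx] with y hy using if_pos (le_of_lt hy)
  · have hl : HasDerivWithinAt (fun y => if y ≤ x then f y else g y) (f' x) (Iic x) x :=
      (hf x).hasDerivWithinAt.congr (fun y hy => if_pos hy) (if_pos le_rfl)
    have hr : HasDerivWithinAt (fun y => if y ≤ x then f y else g y) (f' x) (Ici x) x := by
      refine (hb' ▸ hg x).hasDerivWithinAt.congr (fun y hy => ?_) (by simp [hb])
      rcases (mem_Ici.1 hy).eq_or_lt with rfl | hxy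
      · simp [hb]
      · exact if_neg (not_le.2 hxy)
    simpa [if_pos le_rfl] using hl.union hr
  · rw [if_neg (not_le.2 hx)]
    refine (hg x).congr_of_eventuallyEq ?_
    filter_upwards [Ioi_mem_nhds hx] with y hy using if_neg (not_le.2 hy)

structure SmoothFit (σ η δ γ b : ℝ) : Prop where
  sigma_ne_zero : σ ≠ 0
  eta_pos : 0 < η
  delta_pos : 0 < δ
  gamma_pos : 0 < γ
  g1_eq_f1 : g1 σ η δ b = f1 σ η δ γ

-- `v'` and `v''`, with the constants `c₁₁ = 1 / h₁' b` and `c₁₂ λ = δ / (γ + δ)` forced by the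
-- smooth-fit condition already substituted.
noncomputable def vGammaB' (σ η δ γ b : ℝ) (x : ℝ) : ℝ :=
  if x ≤ b then h1' σ η δ x / h1' σ η δ b
  else (δ * Real.exp (lamGamma σ η δ γ * (x - b)) + γ) / (γ + δ)

noncomputable def vGammaB'' (σ η δ γ b : ℝ) (x : ℝ) : ℝ :=
  if x ≤ b then h1'' σ η δ x / h1' σ η δ b
  else δ * lamGamma σ η δ γ * Real.exp (lamGamma σ η δ γ * (x - b)) / (γ + δ)

namespace SmoothFit

variable {σ η δ γ b : ℝ}

theorem lamGamma_neg (hv : SmoothFit σ η δ γ b) : lamGamma σ η δ γ < 0 := by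
  rw [lamGamma_eq_thetaM]
  exact thetaM_neg hv.sigma_ne_zero (add_pos hv.delta_pos hv.gamma_pos)

theorem lamGamma_isRoot (hv : SmoothFit σ η δ γ b) :
    σ ^ 2 / 2 * lamGamma σ η δ γ ^ 2 + η * lamGamma σ η δ γ - (δ + γ) = 0 := by
  rw [lamGamma_eq_thetaM]
  exact thetaM_isRoot hv.sigma_ne_zero (add_pos hv.delta_pos hv.gamma_pos).le

theorem h1'_pos (hv : SmoothFit σ η δ γ b) (x : ℝ) : 0 < h1' σ η δ x :=
  _root_.h1'_pos hv.sigma_ne_zero hv.delta_pos x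

theorem h1_eq (hv : SmoothFit σ η δ γ b) :
    h1 σ η δ b = h1' σ η δ b * (1 / lamGamma σ η δ γ + γ * η / (δ * (γ + δ))) := by
  rw [← f1_eq, ← hv.g1_eq_f1, g1, mul_div_cancel₀ _ (hv.h1'_pos b).ne']

theorem c11_eq (hv : SmoothFit σ η δ γ b) : c11 σ η δ γ b = 1 / h1' σ η δ b := by
  have hlam := hv.lamGamma_neg
  have hγδ : 0 < γ + δ := add_pos hv.gamma_pos hv.delta_pos
  have hN : 0 < γ / (γ + δ) * (1 - η * lamGamma σ η δ γ / (γ + δ)) := by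
    have hneg : η * lamGamma σ η δ γ / (γ + δ) < 0 :=
      div_neg_of_neg_of_pos (mul_neg_of_pos_of_neg hv.eta_pos hlam) hγδ
    exact mul_pos (div_pos hv.gamma_pos hγδ) (by linarith)
  have hD : h1' σ η δ b - δ * lamGamma σ η δ γ / (γ + δ) * h1 σ η δ b =
      h1' σ η δ b * (γ / (γ + δ) * (1 - η * lamGamma σ η δ γ / (γ + δ))) := by
    rw [hv.h1_eq]
    field_simp [hlam.ne, hv.delta_pos.ne']
    ring
  rw [c11, hD, div_mul_cancel_right₀ hN.ne', one_div]

theorem c12_mul_lamGamma (hv : SmoothFit σ η δ γ b) :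
    c12 σ η δ γ b * lamGamma σ η δ γ = δ / (γ + δ) := by
  have hγδ : γ + δ ≠ 0 := (add_pos hv.gamma_pos hv.delta_pos).ne'
  rw [c12, hv.c11_eq, hv.h1_eq]
  field_simp [hv.lamGamma_neg.ne, hv.delta_pos.ne', (hv.h1'_pos b).ne']
  ring

theorem h1''_eq (hv : SmoothFit σ η δ γ b) :
    h1'' σ η δ b = δ * lamGamma σ η δ γ / (γ + δ) * h1' σ η δ b := by
  have hode := h1_ode (η := η) hv.sigma_ne_zero hv.delta_pos.le b
  rw [hv.h1_eq] at hode
  have hσ := hv.sigma_ne_zero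
  have hlam := hv.lamGamma_neg.ne
  have hγδ := (add_pos hv.gamma_pos hv.delta_pos).ne'
  have hδ := hv.delta_pos.ne'
  linear_combination (norm := skip) 2 / σ ^ 2 * hode -
    2 * δ * h1' σ η δ b / (σ ^ 2 * (γ + δ) * lamGamma σ η δ γ) * hv.lamGamma_isRoot
  field_simp
  ring

theorem hasDerivAt_exp_mul_sub (c a x : ℝ) :
    HasDerivAt (fun y => Real.exp (c * (y - a))) (c * Real.exp (c * (x - a))) x := by
  simpa [mul_comm] using (((hasDerivAt_id x).sub_const a).const_mul c).exp

theorem hasDerivAt_vGammaB (hv : SmoothFit σ η δ γ b) (x : ℝ) :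
    HasDerivAt (vGammaB σ η δ γ b) (vGammaB' σ η δ γ b x) x := by
  have hγδ : γ + δ ≠ 0 := (add_pos hv.gamma_pos hv.delta_pos).ne'
  have hleft (y : ℝ) : HasDerivAt (fun z => c11 σ η δ γ b * h1 σ η δ z)
      (h1' σ η δ y / h1' σ η δ b) y :=
    ((hasDerivAt_h1 y).const_mul _).congr_deriv (by rw [hv.c11_eq]; ring)
  have hright (y : ℝ) : HasDerivAt (fun z => c12 σ η δ γ b * Real.exp (lamGamma σ η δ γ * (z - b)) +
      γ / (γ + δ) * (z - b + c11 σ η δ γ b * h1 σ η δ b + η / (γ + δ)))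
      ((δ * Real.exp (lamGamma σ η δ γ * (y - b)) + γ) / (γ + δ)) y := by
    refine (((hasDerivAt_exp_mul_sub _ b y).const_mul _).add
      (((((hasDerivAt_id' y).sub_const b).add_const _).add_const _).const_mul _)).congr_deriv ?_
    rw [← mul_assoc, hv.c12_mul_lamGamma]
    field_simp
  refine hasDerivAt_ite_le hleft hright ?_ ?_ x
  · simp only [sub_self, mul_zero, Real.exp_zero, mul_one, zero_add, c12]
    field_simp
    ring
  · simp only [sub_self, mul_zero, Real.exp_zero, mul_one, div_self (hv.h1'_pos b).ne']
    field_simp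
    ring

theorem hasDerivAt_vGammaB' (hv : SmoothFit σ η δ γ b) (x : ℝ) :
    HasDerivAt (vGammaB' σ η δ γ b) (vGammaB'' σ η δ γ b x) x := by
  have hγδ : γ + δ ≠ 0 := (add_pos hv.gamma_pos hv.delta_pos).ne'
  have hright (y : ℝ) : HasDerivAt
      (fun z => (δ * Real.exp (lamGamma σ η δ γ * (z - b)) + γ) / (γ + δ))
      (δ * lamGamma σ η δ γ * Real.exp (lamGamma σ η δ γ * (y - b)) / (γ + δ)) y :=
    ((((hasDerivAt_exp_mul_sub _ b y).const_mul δ).add_const γ).div_const _).congr_deriv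
      (by ring)
  refine hasDerivAt_ite_le (fun y => (hasDerivAt_h1' y).div_const _) hright ?_ ?_ x
  · simp only [sub_self, mul_zero, Real.exp_zero, mul_one, div_self (hv.h1'_pos b).ne']
    field_simp
    ring
  · simp only [sub_self, mul_zero, Real.exp_zero, mul_one, hv.h1''_eq]
    field_simp [(hv.h1'_pos b).ne']

theorem deriv_vGammaB (hv : SmoothFit σ η δ γ b) : deriv (vGammaB σ η δ γ b) = vGammaB' σ η δ γ b :=
  funext fun x => (hv.hasDerivAt_vGammaB x).deriv

theorem deriv_vGammaB' (hv : SmoothFit σ η δ γ b) :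
    deriv (vGammaB' σ η δ γ b) = vGammaB'' σ η δ γ b :=
  funext fun x => (hv.hasDerivAt_vGammaB' x).deriv

theorem vGammaB'_self (hv : SmoothFit σ η δ γ b) : vGammaB' σ η δ γ b b = 1 := by
  rw [vGammaB', if_pos le_rfl, div_self (hv.h1'_pos b).ne']

theorem h1''_neg (hv : SmoothFit σ η δ γ b) {x : ℝ} (hx : x ≤ b) : h1'' σ η δ x < 0 := by
  have hb : h1'' σ η δ b < 0 := by
    rw [hv.h1''_eq]
    exact mul_neg_of_neg_of_pos (div_neg_of_neg_of_pos (mul_neg_of_pos_of_neg hv.delta_pos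
      hv.lamGamma_neg) (add_pos hv.gamma_pos hv.delta_pos)) (hv.h1'_pos b)
  exact ((strictMono_h1'' hv.sigma_ne_zero hv.delta_pos).monotone hx).trans_lt hb

theorem vGammaB'_pos (hv : SmoothFit σ η δ γ b) (x : ℝ) : 0 < vGammaB' σ η δ γ b x := by
  unfold vGammaB'
  split_ifs
  · exact div_pos (hv.h1'_pos x) (hv.h1'_pos b)
  · exact div_pos (add_pos (mul_pos hv.delta_pos (Real.exp_pos _)) hv.gamma_pos)
      (add_pos hv.gamma_pos hv.delta_pos)

theorem vGammaB''_neg (hv : SmoothFit σ η δ γ b) (x : ℝ) : vGammaB'' σ η δ γ b x < 0 := by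
  unfold vGammaB''
  split_ifs with hx
  · exact div_neg_of_neg_of_pos (hv.h1''_neg hx) (hv.h1'_pos b)
  · exact div_neg_of_neg_of_pos (mul_neg_of_neg_of_pos (mul_neg_of_pos_of_neg hv.delta_pos
      hv.lamGamma_neg) (Real.exp_pos _)) (add_pos hv.gamma_pos hv.delta_pos)

theorem strictAnti_vGammaB' (hv : SmoothFit σ η δ γ b) : StrictAnti (vGammaB' σ η δ γ b) :=
  strictAnti_of_hasDerivAt_neg hv.hasDerivAt_vGammaB' hv.vGammaB''_neg

theorem hasDerivAt_vGammaB_sub_id (hv : SmoothFit σ η δ γ b) (x : ℝ) :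
    HasDerivAt (fun y => vGammaB σ η δ γ b y - y) (vGammaB' σ η δ γ b x - 1) x :=
  (hv.hasDerivAt_vGammaB x).sub (hasDerivAt_id' x)

theorem monotoneOn_vGammaB_sub_id (hv : SmoothFit σ η δ γ b) :
    MonotoneOn (fun y => vGammaB σ η δ γ b y - y) (Iic b) :=
  monotoneOn_of_hasDerivWithinAt_nonneg
    (convex_Iic b) (fun y _ => (hv.hasDerivAt_vGammaB_sub_id y).continuousAt.continuousWithinAt)
    (fun y _ => (hv.hasDerivAt_vGammaB_sub_id y).hasDerivWithinAt)
    fun y hy => by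
      rw [interior_Iic] at hy
      linarith [hv.strictAnti_vGammaB'.antitone (le_of_lt hy), hv.vGammaB'_self]

theorem antitoneOn_vGammaB_sub_id (hv : SmoothFit σ η δ γ b) :
    AntitoneOn (fun y => vGammaB σ η δ γ b y - y) (Ici b) :=
  antitoneOn_of_hasDerivWithinAt_nonpos
    (convex_Ici b) (fun y _ => (hv.hasDerivAt_vGammaB_sub_id y).continuousAt.continuousWithinAt)
    (fun y _ => (hv.hasDerivAt_vGammaB_sub_id y).hasDerivWithinAt)
    fun y hy => by
      rw [interior_Ici] at hy
      linarith [hv.strictAnti_vGammaB'.antitone (le_of_lt hy), hv.vGammaB'_self]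

theorem vGammaB_sub_le (hv : SmoothFit σ η δ γ b) {x y : ℝ} (hyx : y ≤ x) :
    vGammaB σ η δ γ b y - y ≤ vGammaB σ η δ γ b (min x b) - min x b := by
  rcases le_or_gt y (min x b) with hy | hy
  · exact hv.monotoneOn_vGammaB_sub_id (hy.trans (min_le_right x b)) (min_le_right x b) hy
  · have hbx : b ≤ x := by
      by_contra! h
      rw [min_eq_left h.le] at hy
      linarith
    rw [min_eq_right hbx] at hy ⊢
    exact hv.antitoneOn_vGammaB_sub_id (le_refl b) hy.le hy.le

theorem ratio_eq_of_le (hv : SmoothFit σ η δ γ b) {x : ℝ} (hx : x ≤ b) :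
    vGammaB' σ η δ γ b x / vGammaB'' σ η δ γ b x = h1' σ η δ x / h1'' σ η δ x := by
  rw [vGammaB', if_pos hx, vGammaB'', if_pos hx, div_div_div_cancel_right₀ (hv.h1'_pos b).ne']

theorem ratio_eq_of_ge (hv : SmoothFit σ η δ γ b) {x : ℝ} (hx : b ≤ x) :
    vGammaB' σ η δ γ b x / vGammaB'' σ η δ γ b x = 1 / lamGamma σ η δ γ +
      γ / (δ * lamGamma σ η δ γ) * Real.exp (-lamGamma σ η δ γ * (x - b)) := by
  have hlam := hv.lamGamma_neg.ne
  have hδ := hv.delta_pos.ne'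
  have hγδ := (add_pos hv.gamma_pos hv.delta_pos).ne'
  rcases hx.eq_or_lt with rfl | hbx
  · rw [hv.vGammaB'_self, vGammaB'', if_pos le_rfl, hv.h1''_eq,
      mul_div_cancel_right₀ _ (hv.h1'_pos b).ne', sub_self, mul_zero, Real.exp_zero]
    field_simp
    ring
  · rw [vGammaB', if_neg (not_le.2 hbx), vGammaB'', if_neg (not_le.2 hbx), neg_mul,
      Real.exp_neg]
    field_simp

theorem antitoneOn_ratio_Iic (hv : SmoothFit σ η δ γ b) :
    AntitoneOn (fun x => h1' σ η δ x / h1'' σ η δ x) (Iic b) := by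
  have hderiv (x : ℝ) (hx : x ≤ b) : HasDerivAt (fun y => h1' σ η δ y / h1'' σ η δ y)
      ((h1'' σ η δ x * h1'' σ η δ x - h1' σ η δ x * h1''' σ η δ x) / h1'' σ η δ x ^ 2) x :=
    (hasDerivAt_h1' x).div (hasDerivAt_h1'' x) (hv.h1''_neg hx).ne
  refine antitoneOn_of_hasDerivWithinAt_nonpos (convex_Iic b)
    (fun x hx => (hderiv x hx).continuousAt.continuousWithinAt)
    (fun x hx => (hderiv x (interior_subset hx : x ∈ Iic b)).hasDerivWithinAt) fun x _ => ?_
  rw [← sq]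
  exact div_nonpos_of_nonpos_of_nonneg
    (h1''_sq_sub_h1'_mul_h1'''_neg hv.sigma_ne_zero hv.delta_pos x).le (sq_nonneg _)

theorem antitone_ratio (hv : SmoothFit σ η δ γ b) :
    Antitone fun x => vGammaB' σ η δ γ b x / vGammaB'' σ η δ γ b x := by
  refine AntitoneOn.Iic_union_Ici (a := b) ?_ ?_
  · exact hv.antitoneOn_ratio_Iic.congr fun x hx => (hv.ratio_eq_of_le hx).symm
  · intro x hx y hy hxy
    dsimp only
    rw [hv.ratio_eq_of_ge hx, hv.ratio_eq_of_ge hy]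
    have hcoef : γ / (δ * lamGamma σ η δ γ) ≤ 0 :=
      div_nonpos_of_nonneg_of_nonpos hv.gamma_pos.le
        (mul_nonpos_of_nonneg_of_nonpos hv.delta_pos.le hv.lamGamma_neg.le)
    have hexp : Real.exp (-lamGamma σ η δ γ * (x - b)) ≤ Real.exp (-lamGamma σ η δ γ * (y - b)) :=
      Real.exp_le_exp.2 (mul_le_mul_of_nonneg_left (by linarith) (by linarith [hv.lamGamma_neg]))
    linarith [mul_le_mul_of_nonpos_left hexp hcoef]

theorem ratio_zero (hv : SmoothFit σ η δ γ b) (hb : 0 ≤ b) :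
    vGammaB' σ η δ γ b 0 / vGammaB'' σ η δ γ b 0 = -σ ^ 2 / (2 * η) := by
  have hsum := thetaP_add_thetaM (σ := σ) (η := η) (δ := δ)
  have hne : thetaP σ η δ - thetaM σ η δ ≠ 0 :=
    (sub_pos.2 ((thetaM_neg hv.sigma_ne_zero hv.delta_pos).trans
      (thetaP_pos hv.sigma_ne_zero hv.delta_pos))).ne'
  have hσ := hv.sigma_ne_zero
  have hη := hv.eta_pos.ne'
  rw [hv.ratio_eq_of_le hb, h1', h1'']
  simp only [mul_zero, Real.exp_zero, mul_one]
  rw [sq_sub_sq, div_mul_cancel_right₀ hne, hsum]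
  field_simp

theorem tendsto_ratio (hv : SmoothFit σ η δ γ b) (hb : 0 < b) :
    Tendsto (fun x => vGammaB' σ η δ γ b x / vGammaB'' σ η δ γ b x) (nhdsWithin 0 (Ioi 0))
      (nhds (-σ ^ 2 / (2 * η))) := by
  have hcont : ContinuousAt (fun x => h1' σ η δ x / h1'' σ η δ x) 0 :=
    (hasDerivAt_h1' 0).continuousAt.div (hasDerivAt_h1'' 0).continuousAt (hv.h1''_neg hb.le).ne
  have heq : (fun x => vGammaB' σ η δ γ b x / vGammaB'' σ η δ γ b x) =ᶠ[nhds 0]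
      fun x => h1' σ η δ x / h1'' σ η δ x := by
    filter_upwards [Iic_mem_nhds hb] with x hx using hv.ratio_eq_of_le hx
  rw [← hv.ratio_zero hb.le]
  exact (hcont.congr heq.symm).tendsto.mono_left nhdsWithin_le_nhds

theorem mul_vGammaB'_add_mul_vGammaB''_nonneg (hv : SmoothFit σ η δ γ b) (hb : 0 ≤ b) {μ : ℝ}
    (hμ : 2 * η ≤ μ) {x : ℝ} (hx : 0 ≤ x) :
    0 ≤ μ * vGammaB' σ η δ γ b x + σ ^ 2 * vGammaB'' σ η δ γ b x := by
  have hratio : vGammaB' σ η δ γ b x / vGammaB'' σ η δ γ b x ≤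
      vGammaB' σ η δ γ b 0 / vGammaB'' σ η δ γ b 0 := hv.antitone_ratio hx
  rw [hv.ratio_zero hb, div_le_iff_of_neg (hv.vGammaB''_neg x), div_mul_eq_mul_div,
    div_le_iff₀ (by linarith [hv.eta_pos])] at hratio
  nlinarith [hv.vGammaB'_pos x]

theorem hjb_eq (hv : SmoothFit σ η δ γ b) (x : ℝ) :
    σ ^ 2 / 2 * vGammaB'' σ η δ γ b x + η * vGammaB' σ η δ γ b x - δ * vGammaB σ η δ γ b x +
      γ * (x - min x b + vGammaB σ η δ γ b (min x b) - vGammaB σ η δ γ b x) = 0 := by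
  rcases le_or_gt x b with hx | hx
  · rw [min_eq_left hx, vGammaB'', vGammaB', vGammaB, if_pos hx, if_pos hx, if_pos hx,
      hv.c11_eq]
    linear_combination (1 / h1' σ η δ b) * h1_ode (η := η) hv.sigma_ne_zero hv.delta_pos.le x
  · have hc12 : c12 σ η δ γ b = δ / (γ + δ) / lamGamma σ η δ γ := by
      rw [← hv.c12_mul_lamGamma, mul_div_cancel_right₀ _ hv.lamGamma_neg.ne]
    have hlam := hv.lamGamma_neg.ne
    have hγδ := (add_pos hv.gamma_pos hv.delta_pos).ne'
    rw [min_eq_right hx.le, vGammaB'', vGammaB', vGammaB, if_neg (not_le.2 hx),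
      if_neg (not_le.2 hx), if_neg (not_le.2 hx), vGammaB, if_pos le_rfl, hc12]
    linear_combination (norm := skip) δ * Real.exp (lamGamma σ η δ γ * (x - b)) /
      ((γ + δ) * lamGamma σ η δ γ) * hv.lamGamma_isRoot
    field_simp
    ring

theorem quadratic_control_le {s a c μ η u : ℝ} (hs : 0 ≤ s) (hc : c ≤ 0) (h : 0 ≤ μ * a + s * c)
    (hu : u ≤ 1) :
    1 / 2 * s * u ^ 2 * c + (η - (1 - u) * μ) * a ≤ 1 / 2 * s * c + η * a := by
  have hslack : 0 ≤ s / 2 * ((1 - u) * -c) :=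
    mul_nonneg (by linarith) (mul_nonneg (by linarith) (by linarith))
  have hgap : 0 ≤ (1 - u) * (μ * a + s / 2 * (1 + u) * c) :=
    mul_nonneg (by linarith) (by linarith)
  linarith

theorem isGreatest_hamiltonian (hv : SmoothFit σ η δ γ b) (hb : 0 ≤ b) {μ : ℝ}
    (hμ : 2 * η ≤ μ) {x : ℝ} (hx : 0 ≤ x) :
    IsGreatest ((fun p : ℝ × ℝ =>
        1 / 2 * σ ^ 2 * p.1 ^ 2 * vGammaB'' σ η δ γ b x +
          (η - (1 - p.1) * μ) * vGammaB' σ η δ γ b x - δ * vGammaB σ η δ γ b x +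
          γ * (p.2 + vGammaB σ η δ γ b (x - p.2) - vGammaB σ η δ γ b x)) ''
      (Icc 0 1 ×ˢ Icc 0 x)) 0 := by
  have hode := hv.hjb_eq x
  refine ⟨⟨(1, x - min x b), ⟨⟨zero_le_one, le_rfl⟩, ?_, ?_⟩, ?_⟩, ?_⟩
  · linarith [min_le_left x b]
  · linarith [le_min hx hb]
  · dsimp only
    rw [sub_sub_cancel]
    linear_combination hode
  · rintro _ ⟨⟨u, ξ⟩, ⟨⟨-, hu⟩, hξ, -⟩, rfl⟩
    have hcontrol := quadratic_control_le (η := η) (sq_nonneg σ) (hv.vGammaB''_neg x).le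
      (hv.mul_vGammaB'_add_mul_vGammaB''_nonneg hb hμ hx) hu
    have hjump := hv.vGammaB_sub_le (x := x) (y := x - ξ) (by linarith [hξ])
    dsimp only
    nlinarith [mul_le_mul_of_nonneg_left hjump hv.gamma_pos.le]

end SmoothFit

theorem vGammaB_optimal_properties_general (σ η δ γ μ bγ : ℝ)
    (hσ : 0 < σ) (hη : 0 < η) (hδ : 0 < δ)
    (hγ : σ ^ 2 * δ ^ 2 / (2 * η ^ 2) < γ)
    (hbγ : 0 < bγ) (hbeq : g1 σ η δ bγ = f1 σ η δ γ) :
    MonotoneOn (vGammaB σ η δ γ bγ) (Set.Ioi 0) ∧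
    ConcaveOn ℝ (Set.Ioi 0) (vGammaB σ η δ γ bγ) ∧
    deriv (vGammaB σ η δ γ bγ) bγ = 1 ∧
    AntitoneOn (fun x =>
      deriv (vGammaB σ η δ γ bγ) x / deriv (deriv (vGammaB σ η δ γ bγ)) x) (Set.Ioi 0) ∧
    Tendsto (fun x =>
        deriv (vGammaB σ η δ γ bγ) x / deriv (deriv (vGammaB σ η δ γ bγ)) x)
      (nhdsWithin 0 (Set.Ioi 0)) (nhds (-σ ^ 2 / (2 * η))) ∧
    (2 * η ≤ μ → ∀ x : ℝ, 0 < x →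
      sSup ((fun p : ℝ × ℝ =>
          1 / 2 * σ ^ 2 * p.1 ^ 2 * deriv (deriv (vGammaB σ η δ γ bγ)) x +
            (η - (1 - p.1) * μ) * deriv (vGammaB σ η δ γ bγ) x -
            δ * vGammaB σ η δ γ bγ x +
            γ * (p.2 + vGammaB σ η δ γ bγ (x - p.2) - vGammaB σ η δ γ bγ x)) ''
        (Set.Icc 0 1 ×ˢ Set.Icc 0 x)) = 0) := by
  have hγ₀ : 0 < γ := lt_of_le_of_lt (by positivity) hγ
  have hv : SmoothFit σ η δ γ bγ := ⟨hσ.ne', hη, hδ, hγ₀, hbeq⟩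
  have hconcave : ConcaveOn ℝ univ (vGammaB σ η δ γ bγ) :=
    Antitone.concaveOn_univ_of_deriv (fun x => (hv.hasDerivAt_vGammaB x).differentiableAt)
      (hv.deriv_vGammaB ▸ hv.strictAnti_vGammaB'.antitone)
  rw [hv.deriv_vGammaB, hv.deriv_vGammaB']
  exact ⟨(strictMono_of_hasDerivAt_pos hv.hasDerivAt_vGammaB hv.vGammaB'_pos).monotone.monotoneOn _,
    hconcave.subset (subset_univ _) (convex_Ioi 0), hv.vGammaB'_self,
    hv.antitone_ratio.antitoneOn _, hv.tendsto_ratio hbγ,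
    fun hμ x hx => (hv.isGreatest_hamiltonian hbγ.le hμ hx.le).csSup_eq⟩

theorem vGammaB_optimal_properties (σ η δ γ μ bγ : ℝ)
    (hσ : 0 < σ) (hη : 0 < η) (hδ : 0 < δ) (hμ : 0 < μ)
    (hγ : σ ^ 2 * δ ^ 2 / (2 * η ^ 2) < γ)
    (hbγ : 0 < bγ) (hbeq : g1 σ η δ bγ = f1 σ η δ γ) :
    MonotoneOn (vGammaB σ η δ γ bγ) (Set.Ioi 0) ∧
    ConcaveOn ℝ (Set.Ioi 0) (vGammaB σ η δ γ bγ) ∧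
    deriv (vGammaB σ η δ γ bγ) bγ = 1 ∧
    AntitoneOn (fun x =>
      deriv (vGammaB σ η δ γ bγ) x / deriv (deriv (vGammaB σ η δ γ bγ)) x) (Set.Ioi 0) ∧
    Tendsto (fun x =>
        deriv (vGammaB σ η δ γ bγ) x / deriv (deriv (vGammaB σ η δ γ bγ)) x)
      (nhdsWithin 0 (Set.Ioi 0)) (nhds (-σ ^ 2 / (2 * η))) ∧
    (2 * η ≤ μ → ∀ x : ℝ, 0 < x →
      sSup ((fun p : ℝ × ℝ =>
          1 / 2 * σ ^ 2 * p.1 ^ 2 * deriv (deriv (vGammaB σ η δ γ bγ)) x +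
            (η - (1 - p.1) * μ) * deriv (vGammaB σ η δ γ bγ) x -
            δ * vGammaB σ η δ γ bγ x +
            γ * (p.2 + vGammaB σ η δ γ bγ (x - p.2) - vGammaB σ η δ γ bγ x)) ''
        (Set.Icc 0 1 ×ˢ Set.Icc 0 x)) = 0) :=
  vGammaB_optimal_properties_general σ η δ γ μ bγ hσ hη hδ hγ hbγ hbeq
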